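/- arXiv:2505.03493 — 2 statements merged into one kernel-verified Lean document; each statement's English description precedes it below -/
import Mathlib

section
/- Let V_c(x) = g_c⊤ x + b_c be an affine function on a cell Y_c, and suppose for vectors γ_d with Σ_d γ_d = g_c the quantity s := Σ_d γ_d⊤ f(x_d) + ‖γ_d‖ M ‖v − x_d‖ is negative at a point v ∈ Y_c, where f is M-Lipschitz. Then ∇V_c(v)⊤ f(v) = g_c⊤ f(v) < 0. -/
open Finset

section LipschitzInner

variable {E F : Type*} [SeminormedAddCommGroup E] [SeminormedAddCommGroup F] [InnerProductSpace ℝ F]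
  {f : E → F} {M : ℝ}

theorem inner_le_of_norm_sub_le_mul (hf : ∀ a b, ‖f a - f b‖ ≤ M * ‖a - b‖) (γ : F) (p v : E) :
    (inner ℝ γ (f v) : ℝ) ≤ inner ℝ γ (f p) + ‖γ‖ * M * ‖v - p‖ := by
  have hsplit : (inner ℝ γ (f v) : ℝ) = inner ℝ γ (f p) + inner ℝ γ (f v - f p) := by
    rw [← inner_add_right, add_sub_cancel]
  have hbound : (inner ℝ γ (f v - f p) : ℝ) ≤ ‖γ‖ * M * ‖v - p‖ :=
    calc (inner ℝ γ (f v - f p) : ℝ) ≤ ‖γ‖ * ‖f v - f p‖ := real_inner_le_norm _ _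
      _ ≤ ‖γ‖ * (M * ‖v - p‖) := mul_le_mul_of_nonneg_left (hf _ _) (norm_nonneg _)
      _ = ‖γ‖ * M * ‖v - p‖ := (mul_assoc _ _ _).symm
  linarith

theorem inner_sum_le_of_norm_sub_le_mul {ι : Type*} (hf : ∀ a b, ‖f a - f b‖ ≤ M * ‖a - b‖)
    (t : Finset ι) (γ : ι → F) (x : ι → E) (v : E) :
    (inner ℝ (∑ d ∈ t, γ d) (f v) : ℝ) ≤
      ∑ d ∈ t, ((inner ℝ (γ d) (f (x d)) : ℝ) + ‖γ d‖ * M * ‖v - x d‖) := by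
  rw [sum_inner]
  exact sum_le_sum fun d _ => inner_le_of_norm_sub_le_mul hf (γ d) (x d) v

end LipschitzInner

theorem stmt_1_general {n N : ℕ}
    (f : EuclideanSpace ℝ (Fin n) → EuclideanSpace ℝ (Fin n)) (M : ℝ)
    (hf : ∀ a b, ‖f a - f b‖ ≤ M * ‖a - b‖)
    (γ : Fin N → EuclideanSpace ℝ (Fin n)) (gc : EuclideanSpace ℝ (Fin n))
    (hg : gc = ∑ d, γ d)
    (x : Fin N → EuclideanSpace ℝ (Fin n)) (v : EuclideanSpace ℝ (Fin n))
    (s : ℝ)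
    (hs : s = ∑ d, ((inner ℝ (γ d) (f (x d)) : ℝ) + ‖γ d‖ * M * ‖v - x d‖))
    (hneg : s < 0) :
    (inner ℝ gc (f v) : ℝ) < 0 := by
  subst hg hs
  exact (inner_sum_le_of_norm_sub_le_mul hf univ γ x v).trans_lt hneg

/-- Negativity of a slack variable certifies strict decrease of the affine
Lyapunov piece at the corresponding vertex: if `∑ γ d = g_c` and the slack
`s = ∑ d (⟪γ d, f (x d)⟫ + ‖γ d‖ M ‖v - x d‖)` is negative, then
`∇V_c(v)ᵀ f(v) = ⟪g_c, f v⟫ < 0`. -/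
theorem stmt_1 {n N : ℕ}
    (f : EuclideanSpace ℝ (Fin n) → EuclideanSpace ℝ (Fin n)) (M : ℝ)
    (hf : ∀ a b, ‖f a - f b‖ ≤ M * ‖a - b‖)
    (γ : Fin N → EuclideanSpace ℝ (Fin n)) (gc : EuclideanSpace ℝ (Fin n)) (bc : ℝ)
    (Vc : EuclideanSpace ℝ (Fin n) → ℝ)
    (hVc : ∀ y, Vc y = (inner ℝ gc y : ℝ) + bc)
    (hg : gc = ∑ d, γ d)
    (x : Fin N → EuclideanSpace ℝ (Fin n)) (v : EuclideanSpace ℝ (Fin n))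
    (s : ℝ)
    (hs : s = ∑ d, ((inner ℝ (γ d) (f (x d)) : ℝ) + ‖γ d‖ * M * ‖v - x d‖))
    (hneg : s < 0) :
    (inner ℝ gc (f v) : ℝ) < 0 :=
  stmt_1_general f M hf γ gc hg x v s hs hneg
end

section
/- For the damped pendulum f(θ, ω) = (ω, −sin(θ) − 2ω) and V_Q(x) = (1/2) xᵀ Q x with Q = [[10, 3], [3, 4]], the Lie derivative satisfies ∇V_Q(x)⊤ f(x) < 0 for all x = (θ, ω) with 0 < ‖x‖_∞ ≤ 1. -/
/-!
Writing `sin θ = θ - d`, the Lie derivative equals `-3θ² - 5ω² + (3θ + 4ω) d`, a negative definite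
quadratic form plus a perturbation. On `|θ| ≤ 1` the Taylor bound `|θ - sin θ| ≤ |θ|³ / 6` gives
`|d| ≤ |θ| / 6`, which is too small to compensate the quadratic form away from the origin.
-/

open Real

lemma pendulum_lieDeriv_eq (θ ω : ℝ) :
    (10 * θ + 3 * ω) * ω + (3 * θ + 4 * ω) * (-sin θ - 2 * ω) =
      -3 * θ ^ 2 - 5 * ω ^ 2 + (3 * θ + 4 * ω) * (θ - sin θ) := by
  ring

lemma abs_sub_sin_le_abs_div_six {θ : ℝ} (hθ : |θ| ≤ 1) : |θ - sin θ| ≤ |θ| / 6 := by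
  have hcube : |θ| ^ 3 ≤ |θ| := pow_le_of_le_one (abs_nonneg θ) hθ (by norm_num)
  linarith [abs_sub_sin_le θ]

lemma neg_quadratic_add_perturbation_neg {θ ω d : ℝ} (hne : (θ, ω) ≠ (0, 0))
    (hd : |d| ≤ |θ| / 6) : -3 * θ ^ 2 - 5 * ω ^ 2 + (3 * θ + 4 * ω) * d < 0 := by
  have hperturb : (3 * θ + 4 * ω) * d ≤ (3 * |θ| + 4 * |ω|) * (|θ| / 6) :=
    calc (3 * θ + 4 * ω) * d ≤ |3 * θ + 4 * ω| * |d| := by rw [← abs_mul]; exact le_abs_self _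
      _ ≤ (3 * |θ| + 4 * |ω|) * (|θ| / 6) := by
        gcongr
        calc |3 * θ + 4 * ω| ≤ |3 * θ| + |4 * ω| := abs_add_le _ _
          _ = 3 * |θ| + 4 * |ω| := by norm_num [abs_mul]
  have hpos : 0 < θ ^ 2 + ω ^ 2 := by
    by_contra! h
    exact hne (Prod.ext (by nlinarith [sq_nonneg ω]) (by nlinarith [sq_nonneg θ]))
  nlinarith [sq_abs θ, sq_abs ω, sq_nonneg (|θ| - |ω|)]

theorem stmt_9_general (θ ω : ℝ) (hne : (θ, ω) ≠ ((0:ℝ), (0:ℝ)))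
    (hθ : |θ| ≤ 1) :
    (10 * θ + 3 * ω) * ω + (3 * θ + 4 * ω) * (-Real.sin θ - 2 * ω) < 0 := by
  rw [pendulum_lieDeriv_eq]
  exact neg_quadratic_add_perturbation_neg hne (abs_sub_sin_le_abs_div_six hθ)

/-- For the damped pendulum `f(θ, ω) = (ω, -sin θ - 2ω)` and
`V_Q(x) = (1/2) xᵀ Q x` with `Q = [[10,3],[3,4]]`, the Lie derivative
`∇V_Q(x)ᵀ f(x) = (Qx)ᵀ f(x)` is negative on the punctured square
`0 < ‖x‖_∞ ≤ 1`. In coordinates: `Qx = (10θ + 3ω, 3θ + 4ω)`. -/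
theorem stmt_9 (θ ω : ℝ) (hne : (θ, ω) ≠ ((0:ℝ), (0:ℝ)))
    (hθ : |θ| ≤ 1) (hω : |ω| ≤ 1) :
    (10 * θ + 3 * ω) * ω + (3 * θ + 4 * ω) * (-Real.sin θ - 2 * ω) < 0 :=
  stmt_9_general θ ω hne hθ
end
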